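/- For every L ≥ 1 and every t ∈ ℝ, the conjugated annihilation operator satisfies e^{itH_L} a e^{−itH_L} = (1 − Q_L + e^{itL} Π_L + e^{−it} Q_{L−1}) a as linear maps on D, i.e. e^{itH_L} a e^{−itH_L} = F_L(t) a. -/

import Mathlib

open Filter Topology
open scoped ENNReal

noncomputable section

/-- The boson Hilbert space `H = ℓ²(ℕ, ℂ)`. -/
abbrev Hb : Type := lp (fun _ : ℕ => ℂ) 2

/-- The standard orthonormal basis vectors `e n` of `H`. -/
def eb (n : ℕ) : Hb := lp.single 2 n (1 : ℂ)

/-- The dense subspace `D` of finitely supported linear combinations of the `e n`,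
modelled as finitely supported sequences. -/
abbrev Db : Type := ℕ →₀ ℂ

/-- The inclusion `D → H`. -/
def incl : Db →ₗ[ℂ] Hb := Finsupp.linearCombination ℂ eb

/-- The annihilation operator `a : D → D`, `a e₀ = 0`, `a eₙ = √n e_{n-1}`. -/
def aOp : Db →ₗ[ℂ] Db :=
  Finsupp.lsum ℂ fun n => (Real.sqrt n : ℂ) • Finsupp.lsingle (n - 1)

/-- The creation operator `a† : D → D`, `a† eₙ = √(n+1) e_{n+1}`. -/
def adOp : Db →ₗ[ℂ] Db :=
  Finsupp.lsum ℂ fun n => (Real.sqrt (n + 1) : ℂ) • Finsupp.lsingle (n + 1)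

/-- The number operator `N = a† a` on `D`. -/
def ND : Db →ₗ[ℂ] Db := adOp ∘ₗ aOp

/-- The projection `Π_l` restricted to `D`. -/
def PiD (l : ℕ) : Db →ₗ[ℂ] Db :=
  Finsupp.lsum ℂ fun n => if n = l then Finsupp.lsingle n else 0

/-- `Q_L = Σ_{l=0}^L Π_l` on `D`. -/
def QD (L : ℕ) : Db →ₗ[ℂ] Db := ∑ l ∈ Finset.range (L + 1), PiD l

/-- The orthogonal projection `Π_l` of `H` onto `ℂ e_l`. -/
def PiH (l : ℕ) : Hb →L[ℂ] Hb := (innerSL ℂ (eb l)).smulRight (eb l)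

/-- `Q_L = Σ_{l=0}^L Π_l` on `H`. -/
def QH (L : ℕ) : Hb →L[ℂ] Hb := ∑ l ∈ Finset.range (L + 1), PiH l

/-- For a linear map `T : D → H`, the bounded operator `Π_l T Π_s` on `H`
(it is `x ↦ ⟪e_s, x⟫ • Π_l (T e_s)`, of rank at most one). -/
def sandwich (T : Db →ₗ[ℂ] Hb) (l s : ℕ) : Hb →L[ℂ] Hb :=
  (innerSL ℂ (eb s)).smulRight (PiH l (T (Finsupp.single s 1)))

/-- Membership in the set `𝒞` of positive, bounded, continuous functions on `[0,∞)`
decreasing faster than any inverse power. -/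
structure IsC (f : ℝ → ℝ) : Prop where
  cont : ContinuousOn f (Set.Ici (0 : ℝ))
  bdd : ∃ B : ℝ, ∀ x ∈ Set.Ici (0 : ℝ), f x ≤ B
  pos : ∀ x ∈ Set.Ici (0 : ℝ), 0 < f x
  decay : ∀ n : ℕ, Tendsto (fun x : ℝ => x ^ n * f x) atTop (nhds 0)

/-- The seminorm `p_{f,k}(T) = Σ_{l,s} f(l) s^k ‖Π_l T Π_s‖ ∈ [0,∞]`. -/
def semin (f : ℝ → ℝ) (k : ℕ) (T : Db →ₗ[ℂ] Hb) : ℝ≥0∞ :=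
  ∑' (l : ℕ) (s : ℕ), ENNReal.ofReal (f l * (s : ℝ) ^ k * ‖sandwich T l s‖)

end

set_option maxHeartbeats 1000000

noncomputable section

lemma eb_inner (l m : ℕ) : (inner ℂ (eb l) (eb m) : ℂ) = if m = l then 1 else 0 := by
  rw [eb, eb, lp.inner_single_left]
  rcases eq_or_ne m l with h | h
  · subst h; simp [lp.single_apply_self]
  · simp [lp.single_apply_ne _ _ _ (Ne.symm h), h]

lemma eb_orthonormal : Orthonormal ℂ eb := by
  rw [orthonormal_iff_ite]
  intro i j
  rw [eb_inner]
  simp [eq_comm]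

lemma incl_injective : Function.Injective incl :=
  eb_orthonormal.linearIndependent

lemma incl_single (n : ℕ) : incl (Finsupp.single n 1) = eb n := by
  simp [incl]

lemma aOp_single (n : ℕ) :
    aOp (Finsupp.single n 1) = (Real.sqrt n : ℂ) • Finsupp.single (n - 1) 1 := by
  simp [aOp, Finsupp.lsum_single]

lemma adOp_single (n : ℕ) :
    adOp (Finsupp.single n 1) = (Real.sqrt (n + 1) : ℂ) • Finsupp.single (n + 1) 1 := by
  simp [adOp, Finsupp.lsum_single]

lemma ND_single (n : ℕ) : ND (Finsupp.single n 1) = (n : ℂ) • Finsupp.single n 1 := by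
  rw [ND, LinearMap.comp_apply, aOp_single, map_smul, adOp_single]
  rcases n with _ | m
  · simp
  · rw [smul_smul]
    congr 1
    push_cast
    rw [← Complex.ofReal_mul, Real.mul_self_sqrt (by positivity)]
    push_cast
    ring

lemma PiD_single (l n : ℕ) :
    PiD l (Finsupp.single n 1) = if n = l then Finsupp.single n 1 else 0 := by
  simp only [PiD, Finsupp.lsum_single]
  split_ifs with h <;> simp [h]

lemma QD_single (L n : ℕ) :
    QD L (Finsupp.single n 1) = if n ≤ L then Finsupp.single n 1 else 0 := by
  simp only [QD, LinearMap.coe_sum, Finset.sum_apply, PiD_single]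
  rw [Finset.sum_ite_eq (Finset.range (L + 1)) n (fun _ => Finsupp.single n 1)]
  simp [Nat.lt_succ_iff]

lemma PiH_eb (l m : ℕ) : PiH l (eb m) = if m = l then eb m else 0 := by
  simp only [PiH, ContinuousLinearMap.smulRight_apply, innerSL_apply_apply, eb_inner]
  split_ifs with h <;> simp [h]

lemma QH_eb (L m : ℕ) : QH L (eb m) = if m ≤ L then eb m else 0 := by
  simp only [QH, ContinuousLinearMap.coe_sum', Finset.sum_apply, PiH_eb]
  rw [Finset.sum_ite_eq (Finset.range (L + 1)) m (fun _ => eb m)]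
  simp [Nat.lt_succ_iff]

lemma exp_apply_eigen (A : Hb →L[ℂ] Hb) (v : Hb) (μ : ℂ) (h : A v = μ • v) :
    NormedSpace.exp A v = Complex.exp μ • v := by
  have hpow : ∀ n : ℕ, (A ^ n) v = μ ^ n • v := by
    intro n
    induction n with
    | zero => simp
    | succ k ih =>
        rw [pow_succ, ContinuousLinearMap.mul_apply, h, map_smul, ih, smul_smul, pow_succ,
          mul_comm]
  have hs : Summable (fun n : ℕ => (n.factorial⁻¹ : ℂ) • A ^ n) :=
    NormedSpace.expSeries_summable' A
  calc NormedSpace.exp A v = (∑' n : ℕ, (n.factorial⁻¹ : ℂ) • A ^ n) v := by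
        rw [NormedSpace.exp_eq_tsum (𝕂 := ℂ)]
    _ = ∑' n : ℕ, ((n.factorial⁻¹ : ℂ) • A ^ n) v := by
        exact ((ContinuousLinearMap.apply ℂ Hb v).map_tsum hs)
    _ = ∑' n : ℕ, ((n.factorial⁻¹ : ℂ) * μ ^ n) • v := by
        simp only [ContinuousLinearMap.smul_apply, hpow, smul_smul]
    _ = (∑' n : ℕ, (n.factorial⁻¹ : ℂ) * μ ^ n) • v := by
        refine Summable.tsum_smul_const ?_ v
        simpa only [smul_eq_mul] using NormedSpace.expSeries_summable' (𝕂 := ℂ) μ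
    _ = Complex.exp μ • v := by
        congr 1
        rw [Complex.exp_eq_exp_ℂ, NormedSpace.exp_eq_tsum (𝕂 := ℂ)]
        simp [smul_eq_mul]

end

noncomputable section

/-- The bounded operator `F_L(t) = 1 - Q_L + e^{itL} Π_L + e^{-it} Q_{L-1}` on `H`. -/
def FL (L : ℕ) (t : ℝ) : Hb →L[ℂ] Hb :=
  1 - QH L + Complex.exp ((t : ℂ) * Complex.I * (L : ℂ)) • PiH L
    + Complex.exp (-((t : ℂ) * Complex.I)) • QH (L - 1)


lemma FL_eb (L : ℕ) (hL : 1 ≤ L) (t : ℝ) (m : ℕ) :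
    FL L t (eb m) =
      (if m < L then Complex.exp (-((t : ℂ) * Complex.I))
        else if m = L then Complex.exp ((t : ℂ) * Complex.I * (L : ℂ)) else 1) • eb m := by
  simp only [FL, ContinuousLinearMap.add_apply, ContinuousLinearMap.sub_apply,
    ContinuousLinearMap.smul_apply, ContinuousLinearMap.one_apply, QH_eb, PiH_eb]
  rcases lt_trichotomy m L with h | h | h
  · have h1 : m ≤ L := h.le
    have h2 : m ≠ L := h.ne
    have h3 : m ≤ L - 1 := by omega
    simp [h1, h2, h3, h]
  · subst h
    have h3 : ¬ (m ≤ m - 1) := by omega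
    simp [h3, lt_irrefl]
  · have h1 : ¬ m ≤ L := not_le.2 h
    have h2 : m ≠ L := by omega
    have h3 : ¬ m ≤ L - 1 := by omega
    have h4 : ¬ m < L := by omega
    simp [h1, h2, h3, h4]

/-- for every `L ≥ 1` and every `t ∈ ℝ`,
`e^{itH_L} a e^{-itH_L} = F_L(t) a` as linear maps on `D`. `HL L` is the bounded extension of
`H_L = Q_L N Q_L` and `V L` is the restriction of `e^{-itH_L}` to `D`. -/
theorem stmt3 (L : ℕ) (hL : 1 ≤ L) (t : ℝ)
    (HL : ℕ → Hb →L[ℂ] Hb)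
    (hHL : ∀ (L : ℕ) (x : Db), HL L (incl x) = incl (QD L (ND (QD L x))))
    (V : ℕ → Db →ₗ[ℂ] Db)
    (hV : ∀ (L : ℕ) (x : Db),
      incl (V L x) = NormedSpace.exp ((-((t : ℂ) * Complex.I)) • HL L) (incl x)) :
    (NormedSpace.exp (((t : ℂ) * Complex.I) • HL L)).toLinearMap
        ∘ₗ incl ∘ₗ aOp ∘ₗ V L
      = (FL L t).toLinearMap ∘ₗ incl ∘ₗ aOp := by
  have heig : ∀ n : ℕ, HL L (eb n) = (if n ≤ L then (n : ℂ) else 0) • eb n := by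
    intro n
    have h := hHL L (Finsupp.single n 1)
    rw [incl_single] at h
    by_cases hn : n ≤ L
    · rw [QD_single, if_pos hn, ND_single, map_smul, QD_single, if_pos hn, map_smul,
        incl_single] at h
      rw [h, if_pos hn]
    · rw [QD_single, if_neg hn, map_zero, map_zero, map_zero] at h
      rw [h, if_neg hn, zero_smul]
  have hexp : ∀ (c : ℂ) (n : ℕ),
      NormedSpace.exp (c • HL L) (eb n)
        = Complex.exp (c * (if n ≤ L then (n : ℂ) else 0)) • eb n := by
    intro c n
    refine exp_apply_eigen _ _ _ ?_
    rw [ContinuousLinearMap.smul_apply, heig, smul_smul]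
  have hVn : ∀ n : ℕ, V L (Finsupp.single n 1)
      = Complex.exp (-((t : ℂ) * Complex.I) * (if n ≤ L then (n : ℂ) else 0))
          • Finsupp.single n 1 := by
    intro n
    apply incl_injective
    rw [hV L, incl_single, hexp, map_smul, incl_single]
  refine Finsupp.lhom_ext' fun n => LinearMap.ext_ring ?_
  simp only [LinearMap.comp_apply, ContinuousLinearMap.coe_coe, Finsupp.lsingle_apply]
  rw [hVn]
  simp only [map_smul, aOp_single, incl_single]
  rcases n with _ | m
  · simp
  · rw [Nat.add_sub_cancel, hexp, FL_eb L hL t m, smul_smul, smul_smul, smul_smul]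
    congr 1
    rcases lt_trichotomy m L with h | h | h
    · rw [if_pos (by omega : m + 1 ≤ L), if_pos h.le, if_pos h]
      rw [mul_right_comm, ← Complex.exp_add, mul_comm]
      congr 2
      push_cast
      ring
    · subst h
      rw [if_neg (by omega : ¬ m + 1 ≤ m), if_pos le_rfl, if_neg (lt_irrefl m), if_pos rfl]
      rw [mul_zero, Complex.exp_zero, one_mul, mul_comm]
    · rw [if_neg (by omega : ¬ m + 1 ≤ L), if_neg (by omega : ¬ m ≤ L),
        if_neg (by omega : ¬ m < L), if_neg (by omega : ¬ m = L)]
      simp [mul_comm]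


end
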